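/- Let X be a Hilbert space and (A(n))_{n∈Z+} a sequence of bounded linear operators on X whose system x(n+1) = A(n)x(n) admits an exponential dichotomy on Z+ with projections P(n), n ∈ Z+. Define B(n) := A(−n−1)* for n ∈ Z−\{0}, where * denotes the Hilbert-space adjoint. Then the system x(n+1) = B(n)x(n), n ∈ Z−\{0}, admits an exponential dichotomy on Z− with projections P̃(n) := P(−n)*, n ∈ Z−. -/
import Mathlib


open Real ContinuousLinearMap

noncomputable section

universe u

variable {X : Type u} [NormedAddCommGroup X] [NormedSpace ℝ X]

/-- The cocycle associated with the system `x(n+1) = A(n) x(n)`, as a function of the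
number of steps: `cocycleAux A n k = A(n+k-1) ∘ ⋯ ∘ A(n)`. -/
def cocycleAux (A : ℤ → X →L[ℝ] X) (n : ℤ) : ℕ → (X →L[ℝ] X)
  | 0 => ContinuousLinearMap.id ℝ X
  | k + 1 => (A (n + k)).comp (cocycleAux A n k)

/-- The cocycle `Φ(m, n) = A(m-1) ⋯ A(n)` for `m > n`, and `Φ(n, n) = Id`. -/
def Phi (A : ℤ → X →L[ℝ] X) (m n : ℤ) : X →L[ℝ] X :=
  cocycleAux A n (m - n).toNat

/-- The system `x(n+1) = A(n) x(n)`, `n ∈ J'`, admits an exponential dichotomy on `J`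
with respect to the family of (bounded) projections `P(n)`, `n ∈ J`:
there are constants `K, α > 0` such that
(i) `P(n)` are projections, `A(n) P(n) = P(n+1) A(n)` for `n ∈ J'`, and `A(n)` maps
`ker P(n)` bijectively onto `ker P(n+1)` for `n ∈ J'`;
(ii) `‖Φ(m,n) P(n)‖ ≤ K e^{-α (m-n)}` for `m ≥ n` in `J`;
(iii) `‖Φ(m,n) (Id - P(n))‖ ≤ K e^{-α (n-m)}` for `m ≤ n` in `J`, where
`Φ(m,n) : ker P(n) → ker P(m)` denotes the inverse of `Φ(n,m)` restricted to `ker P(m)`;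
the latter is phrased as: whenever `x ∈ ker P(m)` and `Φ(n,m) x = (Id - P(n)) y`,
then `‖x‖ ≤ K e^{-α (n-m)} ‖y‖`. -/
def IsExpDichotomy (J J' : Set ℤ) (A P : ℤ → X →L[ℝ] X) : Prop :=
  ∃ K α : ℝ, 0 < K ∧ 0 < α ∧
    (∀ n ∈ J, (P n).comp (P n) = P n) ∧
    (∀ n ∈ J', (A n).comp (P n) = (P (n + 1)).comp (A n)) ∧
    (∀ n ∈ J', Set.BijOn (A n) {x : X | P n x = 0} {x : X | P (n + 1) x = 0}) ∧
    (∀ m n : ℤ, m ∈ J → n ∈ J → n ≤ m →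
      ‖(Phi A m n).comp (P n)‖ ≤ K * Real.exp (-α * ((m : ℝ) - (n : ℝ)))) ∧
    (∀ m n : ℤ, m ∈ J → n ∈ J → m ≤ n → ∀ x y : X,
      P m x = 0 → Phi A n m x = y - P n y →
      ‖x‖ ≤ K * Real.exp (-α * ((n : ℝ) - (m : ℝ))) * ‖y‖)

/-- The system `x(n+1) = A(n) x(n)`, `n ∈ J'`, admits an exponential dichotomy on `J`. -/
def ExpDichotomy (J J' : Set ℤ) (A : ℤ → X →L[ℝ] X) : Prop :=
  ∃ P : ℤ → X →L[ℝ] X, IsExpDichotomy J J' A P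

/-- A subspace (given as a set) `S` of `X` is complemented: there is a closed subspace `Z`
of `X` with `X = S ⊕ Z`. -/
def IsComplementedSubspace (S : Set X) : Prop :=
  ∃ Z : Submodule ℝ X, IsClosed (Z : Set X) ∧
    (∀ v ∈ S, v ∈ Z → v = (0 : X)) ∧ ∀ v : X, ∃ s ∈ S, ∃ z ∈ Z, v = s + z

/-- The subspace `S = {v : sup_{n ∈ ℤ⁺} ‖Φ(n,0) v‖ < ∞}` of initial conditions of bounded
forward solutions. -/
def Sset (A : ℤ → X →L[ℝ] X) : Set X :=
  {v : X | ∃ C : ℝ, ∀ n : ℤ, 0 ≤ n → ‖Phi A n 0 v‖ ≤ C}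

/-- The subspace `U(m)` of all `v` for which there is a bounded sequence `(x(n))_{n ≤ m}`
with `x(m) = v` and `x(n) = A(n-1) x(n-1)` for `n ≤ m`. -/
def Uset (A : ℤ → X →L[ℝ] X) (m : ℤ) : Set X :=
  {v : X | ∃ x : ℤ → X, x m = v ∧ (∃ C : ℝ, ∀ n : ℤ, n ≤ m → ‖x n‖ ≤ C) ∧
    ∀ n : ℤ, n ≤ m → x n = A (n - 1) (x (n - 1))}

variable {X1 : Type u} {X2 : Type u} [NormedAddCommGroup X1] [NormedSpace ℝ X1]
  [NormedAddCommGroup X2] [NormedSpace ℝ X2]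

/-- The triangular system operator `(x1, x2) ↦ (A11(n) x1 + A12(n) x2, A22(n) x2)`. -/
def triangular (A11 : ℤ → X1 →L[ℝ] X1) (A12 : ℤ → X2 →L[ℝ] X1)
    (A22 : ℤ → X2 →L[ℝ] X2) (n : ℤ) : (X1 × X2) →L[ℝ] X1 × X2 :=
  (((A11 n).comp (fst ℝ X1 X2)) + ((A12 n).comp (snd ℝ X1 X2))).prod
    ((A22 n).comp (snd ℝ X1 X2))

/-- The diagonal system operator `(x1, x2) ↦ (A11(n) x1, A22(n) x2)`. -/
def diagonal (A11 : ℤ → X1 →L[ℝ] X1) (A22 : ℤ → X2 →L[ℝ] X2) (n : ℤ) :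
    (X1 × X2) →L[ℝ] X1 × X2 :=
  (A11 n).prodMap (A22 n)

theorem Phi_self (A : ℤ → X →L[ℝ] X) (n : ℤ) : Phi A n n = ContinuousLinearMap.id ℝ X := by
  simp [Phi, cocycleAux]

theorem Phi_succ (A : ℤ → X →L[ℝ] X) {m n : ℤ} (h : n ≤ m) :
    Phi A (m + 1) n = (A m).comp (Phi A m n) := by
  have h1 : (m + 1 - n).toNat = (m - n).toNat + 1 := by omega
  have h2 : n + ((m - n).toNat : ℤ) = m := by omega
  simp only [Phi, h1, cocycleAux, h2]

theorem Phi_comp (A : ℤ → X →L[ℝ] X) {a b c : ℤ} (hab : a ≤ b) (hbc : b ≤ c) :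
    (Phi A c b).comp (Phi A b a) = Phi A c a := by
  obtain ⟨k, rfl⟩ : ∃ k : ℕ, c = b + k := ⟨(c - b).toNat, by omega⟩
  clear hbc
  induction k with
  | zero => rw [show b + ((0:ℕ):ℤ) = b by omega, Phi_self]; ext x; rfl
  | succ k ih =>
      have e : b + ((k+1 : ℕ):ℤ) = (b + k) + 1 := by push_cast; ring
      rw [e, Phi_succ A (by omega : b ≤ b + (k:ℤ)), Phi_succ A (by omega : a ≤ b + (k:ℤ)),
        ContinuousLinearMap.comp_assoc, ih]

theorem Phi_pred (A : ℤ → X →L[ℝ] X) {m n : ℤ} (h : n ≤ m) :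
    Phi A m (n - 1) = (Phi A m n).comp (A (n - 1)) := by
  have h1 : Phi A n (n - 1) = (A (n-1)).comp (Phi A (n-1) (n-1)) := by
    have := Phi_succ A (le_refl (n-1))
    rwa [show n - 1 + 1 = n by ring] at this
  rw [← Phi_comp A (by omega : n - 1 ≤ n) h, h1, Phi_self]
  ext x; rfl

theorem Phi_adjoint {X : Type u} [NormedAddCommGroup X] [InnerProductSpace ℝ X]
    [CompleteSpace X] (A : ℤ → X →L[ℝ] X) {m n : ℤ} (h : n ≤ m) :
    Phi (fun j => ContinuousLinearMap.adjoint (A (-j - 1))) m n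
      = ContinuousLinearMap.adjoint (Phi A (-n) (-m)) := by
  obtain ⟨k, rfl⟩ : ∃ k : ℕ, m = n + k := ⟨(m - n).toNat, by omega⟩
  clear h
  induction k with
  | zero => rw [show n + ((0:ℕ):ℤ) = n by omega, Phi_self, Phi_self, adjoint_id]
  | succ k ih =>
      have e : n + ((k+1 : ℕ):ℤ) = (n + k) + 1 := by push_cast; ring
      rw [e, Phi_succ _ (by omega : n ≤ n + (k:ℤ)), ih,
        show -(n + (k:ℤ) + 1) = -(n + (k:ℤ)) - 1 by ring,
        Phi_pred A (by omega : -(n + (k:ℤ)) ≤ -n), adjoint_comp,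
        show -(n + (k:ℤ)) - 1 = -(n + (k:ℤ) + 1) by ring]

theorem Phi_comm_P (A P : ℤ → X →L[ℝ] X)
    (hcomm : ∀ n : ℤ, 0 ≤ n → (A n).comp (P n) = (P (n + 1)).comp (A n))
    {m n : ℤ} (hn : 0 ≤ n) (h : n ≤ m) :
    (Phi A m n).comp (P n) = (P m).comp (Phi A m n) := by
  obtain ⟨k, rfl⟩ : ∃ k : ℕ, m = n + k := ⟨(m - n).toNat, by omega⟩
  clear h
  induction k with
  | zero => rw [show n + ((0:ℕ):ℤ) = n by omega, Phi_self]; ext x; rfl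
  | succ k ih =>
      have e : n + ((k+1 : ℕ):ℤ) = (n + k) + 1 := by push_cast; ring
      rw [e, Phi_succ _ (by omega : n ≤ n + (k:ℤ)), ContinuousLinearMap.comp_assoc, ih,
        ← ContinuousLinearMap.comp_assoc, hcomm (n + k) (by omega),
        ContinuousLinearMap.comp_assoc]

theorem Phi_bijOn (A P : ℤ → X →L[ℝ] X)
    (hbij : ∀ n : ℤ, 0 ≤ n → Set.BijOn (A n) {x : X | P n x = 0} {x : X | P (n + 1) x = 0})
    {m n : ℤ} (hn : 0 ≤ n) (h : n ≤ m) :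
    Set.BijOn (Phi A m n) {x : X | P n x = 0} {x : X | P m x = 0} := by
  obtain ⟨k, rfl⟩ : ∃ k : ℕ, m = n + k := ⟨(m - n).toNat, by omega⟩
  clear h
  induction k with
  | zero =>
      rw [show n + ((0:ℕ):ℤ) = n by omega, Phi_self]
      exact Set.bijOn_id _
  | succ k ih =>
      have e : n + ((k+1 : ℕ):ℤ) = (n + k) + 1 := by push_cast; ring
      rw [e, Phi_succ _ (by omega : n ≤ n + (k:ℤ))]
      rw [ContinuousLinearMap.coe_comp']
      exact (hbij (n + k) (by omega)).comp ih

open RealInnerProductSpace in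
theorem adjoint_surj_aux {X : Type u} [NormedAddCommGroup X] [InnerProductSpace ℝ X]
    [CompleteSpace X] (A P : ℤ → X →L[ℝ] X) (m : ℤ) (C : ℝ)
    (hprojm : (P m).comp (P m) = P m)
    (hprojm1 : (P (m+1)).comp (P (m+1)) = P (m+1))
    (hcommm : (A m).comp (P m) = (P (m+1)).comp (A m))
    (hbijm : Set.BijOn (A m) {x : X | P m x = 0} {x : X | P (m+1) x = 0})
    (hb : ∀ u v : X, P m u = 0 → A m u = v - P (m+1) v → ‖u‖ ≤ C * ‖v‖)
    (z : X) (hz : ContinuousLinearMap.adjoint (P m) z = 0) :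
    ∃ x : X, ContinuousLinearMap.adjoint (P (m+1)) x = 0 ∧
      ContinuousLinearMap.adjoint (A m) x = z := by
  have happm : ∀ v : X, P m (P m v) = P m v := fun v => by
    have := DFunLike.congr_fun hprojm v; simpa using this
  have happ1 : ∀ v : X, P (m+1) (P (m+1) v) = P (m+1) v := fun v => by
    have := DFunLike.congr_fun hprojm1 v; simpa using this
  have hcapp : ∀ v : X, A m (P m v) = P (m+1) (A m v) := fun v => by
    have := DFunLike.congr_fun hcommm v; simpa using this
  have hg : ∀ v : X, ∃ u : X, P m u = 0 ∧ A m u = v - P (m+1) v := by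
    intro v
    have hker : v - P (m+1) v ∈ {x : X | P (m+1) x = 0} := by
      simp only [Set.mem_setOf_eq, map_sub, happ1, sub_self]
    obtain ⟨u, hu1, hu2⟩ := hbijm.surjOn hker
    exact ⟨u, hu1, hu2⟩
  choose g hg1 hg2 using hg
  have huniq : ∀ u1 u2 : X, P m u1 = 0 → P m u2 = 0 → A m u1 = A m u2 → u1 = u2 :=
    fun u1 u2 h1 h2 h3 => hbijm.injOn h1 h2 h3
  have gadd : ∀ v w : X, g (v + w) = g v + g w := by
    intro v w
    refine huniq _ _ (hg1 _) ?_ ?_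
    · rw [map_add, hg1, hg1, add_zero]
    · rw [map_add, hg2, hg2, hg2, map_add]; abel
  have gsmul : ∀ (c : ℝ) (v : X), g (c • v) = c • g v := by
    intro c v
    refine huniq _ _ (hg1 _) ?_ ?_
    · rw [map_smul, hg1, smul_zero]
    · rw [map_smul, hg2, hg2, map_smul, smul_sub]
  have gnorm : ∀ v : X, ‖g v‖ ≤ C * ‖v‖ := fun v => hb _ _ (hg1 v) (hg2 v)
  let flin : X →ₗ[ℝ] ℝ :=
    { toFun := fun v => ⟪z, g v⟫
      map_add' := fun v w => by simp only [gadd, inner_add_right]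
      map_smul' := fun c v => by simp only [gsmul, real_inner_smul_right, RingHom.id_apply, smul_eq_mul] }
  have fbound : ∀ v : X, ‖flin v‖ ≤ (‖z‖ * C) * ‖v‖ := by
    intro v
    calc ‖flin v‖ = |⟪z, g v⟫| := rfl
    _ ≤ ‖z‖ * ‖g v‖ := abs_real_inner_le_norm z (g v)
    _ ≤ ‖z‖ * (C * ‖v‖) := by
        exact mul_le_mul_of_nonneg_left (gnorm v) (norm_nonneg z)
    _ = (‖z‖ * C) * ‖v‖ := by ring
  let fcont : X →L[ℝ] ℝ := flin.mkContinuous (‖z‖ * C) fbound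
  set x : X := (InnerProductSpace.toDual ℝ X).symm fcont with hxdef
  have hx : ∀ v : X, ⟪x, v⟫ = ⟪z, g v⟫ := fun v => InnerProductSpace.toDual_symm_apply
  refine ⟨x, ?_, ?_⟩
  · refine ext_inner_right ℝ fun v => ?_
    rw [ContinuousLinearMap.adjoint_inner_left, hx, inner_zero_left]
    have hgz : g (P (m+1) v) = 0 := by
      refine huniq _ _ (hg1 _) (map_zero _) ?_
      rw [hg2, map_zero, happ1, sub_self]
    rw [hgz, inner_zero_right]
  · refine ext_inner_right ℝ fun v => ?_
    rw [ContinuousLinearMap.adjoint_inner_left, hx]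
    have hgv : g (A m v) = v - P m v := by
      refine huniq _ _ (hg1 _) ?_ ?_
      · rw [map_sub, happm, sub_self]
      · rw [hg2, map_sub, hcapp]
    rw [hgv, inner_sub_right]
    have hzP : ⟪z, P m v⟫ = (0:ℝ) := by
      rw [← ContinuousLinearMap.adjoint_inner_left, hz, inner_zero_left]
    rw [hzP, sub_zero]

open RealInnerProductSpace

theorem adjoint_dichotomy_Zminus {X : Type u} [NormedAddCommGroup X]
    [InnerProductSpace ℝ X] [CompleteSpace X] (A P : ℤ → X →L[ℝ] X)
    (hP : IsExpDichotomy {n : ℤ | 0 ≤ n} {n : ℤ | 0 ≤ n} A P) :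
    IsExpDichotomy {n : ℤ | n ≤ 0} {n : ℤ | n ≤ -1}
      (fun n => ContinuousLinearMap.adjoint (A (-n - 1)))
      (fun n => ContinuousLinearMap.adjoint (P (-n))) := by
  obtain ⟨K, α, hK, hα, hproj, hcomm, hbij, hb1, hb2⟩ := hP
  have hproj' : ∀ n : ℤ, 0 ≤ n → (P n).comp (P n) = P n := fun n hn => hproj n hn
  have hcomm' : ∀ n : ℤ, 0 ≤ n → (A n).comp (P n) = (P (n + 1)).comp (A n) :=
    fun n hn => hcomm n hn
  have hbij' : ∀ n : ℤ, 0 ≤ n →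
      Set.BijOn (A n) {x : X | P n x = 0} {x : X | P (n + 1) x = 0} :=
    fun n hn => hbij n hn
  have happ : ∀ (k : ℤ), 0 ≤ k → ∀ v : X, P k (P k v) = P k v := by
    intro k hk v
    have := DFunLike.congr_fun (hproj' k hk) v
    simpa using this
  -- the one-step kernel bound, used for the surjectivity construction
  have hbstep : ∀ m : ℤ, 0 ≤ m → ∀ u v : X, P m u = 0 → A m u = v - P (m + 1) v →
      ‖u‖ ≤ (K * Real.exp (-α)) * ‖v‖ := by
    intro m hm u v h1 h2
    have hphi : Phi A (m + 1) m u = A m u := by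
      rw [Phi_succ A (le_refl m), Phi_self]; rfl
    have := hb2 m (m + 1) hm (by simp only [Set.mem_setOf_eq]; omega) (by omega) u v h1
      (by rw [hphi, h2])
    have e : ((m + 1 : ℤ) : ℝ) - ((m : ℤ) : ℝ) = 1 := by push_cast; ring
    rwa [e, mul_one] at this
  refine ⟨K, α, hK, hα, ?_, ?_, ?_, ?_, ?_⟩
  · -- projections
    intro n hn
    show (ContinuousLinearMap.adjoint (P (-n))).comp (ContinuousLinearMap.adjoint (P (-n)))
      = ContinuousLinearMap.adjoint (P (-n))
    rw [← ContinuousLinearMap.adjoint_comp, hproj' (-n) (by simpa using hn)]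
  · -- commutation
    intro n hn
    have hn' : n ≤ -1 := hn
    show (ContinuousLinearMap.adjoint (A (-n - 1))).comp (ContinuousLinearMap.adjoint (P (-n)))
      = (ContinuousLinearMap.adjoint (P (-(n + 1)))).comp
        (ContinuousLinearMap.adjoint (A (-n - 1)))
    rw [show -(n + 1) = -n - 1 by ring, ← ContinuousLinearMap.adjoint_comp,
      ← ContinuousLinearMap.adjoint_comp]
    congr 1
    have := hcomm' (-n - 1) (by omega)
    rw [show -n - 1 + 1 = -n by ring] at this
    rw [this]
  · -- bijectivity on kernels
    intro n hn
    have hn' : n ≤ -1 := hn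
    set m : ℤ := -n - 1 with hmdef
    have hm : 0 ≤ m := by omega
    have e1 : -n = m + 1 := by omega
    have e2 : -(n + 1) = m := by omega
    have hcompker : ∀ x : X, ContinuousLinearMap.adjoint (P m)
        (ContinuousLinearMap.adjoint (A m) x)
        = ContinuousLinearMap.adjoint (A m) (ContinuousLinearMap.adjoint (P (m + 1)) x) := by
      intro x
      have h1 : (ContinuousLinearMap.adjoint (P m)).comp (ContinuousLinearMap.adjoint (A m))
          = (ContinuousLinearMap.adjoint (A m)).comp
            (ContinuousLinearMap.adjoint (P (m + 1))) := by
        rw [← ContinuousLinearMap.adjoint_comp, hcomm' m hm,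
          ← ContinuousLinearMap.adjoint_comp]
      have := DFunLike.congr_fun h1 x
      simpa using this
    refine ⟨?_, ?_, ?_⟩
    · -- MapsTo
      intro x hx
      have hx' : ContinuousLinearMap.adjoint (P (-n)) x = 0 := hx
      show ContinuousLinearMap.adjoint (P (-(n + 1)))
        (ContinuousLinearMap.adjoint (A (-n - 1)) x) = 0
      rw [e2, ← hmdef, hcompker x, show m + 1 = -n from e1.symm, hx', map_zero]
    · -- InjOn
      intro x1 h1 x2 h2 heq
      have h1' : ContinuousLinearMap.adjoint (P (m + 1)) x1 = 0 := by
        rw [← e1]; exact h1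
      have h2' : ContinuousLinearMap.adjoint (P (m + 1)) x2 = 0 := by
        rw [← e1]; exact h2
      have heq' : ContinuousLinearMap.adjoint (A m) x1
          = ContinuousLinearMap.adjoint (A m) x2 := heq
      refine ext_inner_right ℝ fun v => ?_
      have hwker : v - P (m + 1) v ∈ {x : X | P (m + 1) x = 0} := by
        simp only [Set.mem_setOf_eq, map_sub, happ (m + 1) (by omega) v, sub_self]
      obtain ⟨u, hu1, hu2⟩ := (hbij' m hm).surjOn hwker
      have hviz : ∀ i : X, ContinuousLinearMap.adjoint (P (m + 1)) i = 0 →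
          ContinuousLinearMap.adjoint (A m) i = ContinuousLinearMap.adjoint (A m) x2 →
          ⟪i, v⟫ = ⟪x2, v⟫ → True := fun _ _ _ _ => trivial
      have key : ∀ i : X, ContinuousLinearMap.adjoint (P (m + 1)) i = 0 →
          ⟪i, v⟫ = ⟪ContinuousLinearMap.adjoint (A m) i, u⟫ := by
        intro i hi
        have hsplit : ⟪i, v⟫ = ⟪i, P (m + 1) v⟫ + ⟪i, v - P (m + 1) v⟫ := by
          rw [← inner_add_right]; congr 1; abel
        rw [hsplit, ← ContinuousLinearMap.adjoint_inner_left, hi, inner_zero_left, zero_add,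
          ← hu2, ← ContinuousLinearMap.adjoint_inner_left]
      rw [key x1 h1', key x2 h2', heq']
    · -- SurjOn
      intro z hz
      have hz' : ContinuousLinearMap.adjoint (P m) z = 0 := by
        have h0 : ContinuousLinearMap.adjoint (P (-(n + 1))) z = 0 := hz
        rwa [e2] at h0
      obtain ⟨x, hx1, hx2⟩ := adjoint_surj_aux A P m (K * Real.exp (-α)) (hproj' m hm)
        (hproj' (m + 1) (by omega)) (hcomm' m hm) (hbij' m hm) (hbstep m hm) z hz'
      refine ⟨x, ?_, hx2⟩
      show ContinuousLinearMap.adjoint (P (-n)) x = 0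
      rw [e1]; exact hx1
  · -- forward bound
    intro m n hm hn hle
    have hm' : m ≤ 0 := hm
    have hn' : n ≤ 0 := hn
    show ‖(Phi (fun j => ContinuousLinearMap.adjoint (A (-j - 1))) m n).comp
        (ContinuousLinearMap.adjoint (P (-n)))‖ ≤ K * Real.exp (-α * ((m : ℝ) - (n : ℝ)))
    rw [Phi_adjoint A hle, ← ContinuousLinearMap.adjoint_comp,
      ← Phi_comm_P A P hcomm' (by omega : (0:ℤ) ≤ -m) (by omega : -m ≤ -n),
      LinearIsometryEquiv.norm_map]
    have h := hb1 (-n) (-m) (by simp only [Set.mem_setOf_eq]; omega)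
      (by simp only [Set.mem_setOf_eq]; omega) (by omega)
    have e : ((-n : ℤ) : ℝ) - ((-m : ℤ) : ℝ) = (m : ℝ) - (n : ℝ) := by push_cast; ring
    rwa [e] at h
  · -- backward bound
    intro m n hm hn hle x y hx hphi
    have hm' : m ≤ 0 := hm
    have hn' : n ≤ 0 := hn
    have hx' : ContinuousLinearMap.adjoint (P (-m)) x = 0 := hx
    rw [Phi_adjoint A hle] at hphi
    have hphi' : ContinuousLinearMap.adjoint (Phi A (-m) (-n)) x
        = y - ContinuousLinearMap.adjoint (P (-n)) y := hphi
    set c : ℝ := K * Real.exp (-α * ((n : ℝ) - (m : ℝ))) with hcdef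
    have hc : 0 ≤ c := by positivity
    have hinner : ∀ v : X, ⟪x, v⟫ ≤ c * ‖y‖ * ‖v‖ := by
      intro v
      have hwker : v - P (-m) v ∈ {w : X | P (-m) w = 0} := by
        simp only [Set.mem_setOf_eq, map_sub, happ (-m) (by omega) v, sub_self]
      obtain ⟨u, hu1, hu2⟩ := (Phi_bijOn A P hbij' (by omega : (0:ℤ) ≤ -n)
        (by omega : -n ≤ -m)).surjOn hwker
      have hu1' : P (-n) u = 0 := hu1
      have hsplit : ⟪x, v⟫ = ⟪x, P (-m) v⟫ + ⟪x, v - P (-m) v⟫ := by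
        rw [← inner_add_right]; congr 1; abel
      have h1 : ⟪x, P (-m) v⟫ = (0:ℝ) := by
        rw [← ContinuousLinearMap.adjoint_inner_left, hx', inner_zero_left]
      have h2 : ⟪x, v - P (-m) v⟫ = ⟪y, u⟫ := by
        rw [← hu2, ← ContinuousLinearMap.adjoint_inner_left, hphi', inner_sub_left,
          ContinuousLinearMap.adjoint_inner_left, hu1', inner_zero_right, sub_zero]
      have hu : ‖u‖ ≤ c * ‖v‖ := by
        have h := hb2 (-n) (-m) (by simp only [Set.mem_setOf_eq]; omega)
          (by simp only [Set.mem_setOf_eq]; omega) (by omega) u v hu1' hu2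
        have e : ((-m : ℤ) : ℝ) - ((-n : ℤ) : ℝ) = (n : ℝ) - (m : ℝ) := by push_cast; ring
        rwa [e, ← hcdef] at h
      calc ⟪x, v⟫ = ⟪y, u⟫ := by rw [hsplit, h1, zero_add, h2]
        _ ≤ ‖y‖ * ‖u‖ := real_inner_le_norm y u
        _ ≤ ‖y‖ * (c * ‖v‖) := mul_le_mul_of_nonneg_left hu (norm_nonneg y)
        _ = c * ‖y‖ * ‖v‖ := by ring
    rcases eq_or_ne x 0 with h0 | h0
    · rw [h0, norm_zero]
      exact mul_nonneg hc (norm_nonneg y)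
    · have hxx := hinner x
      rw [real_inner_self_eq_norm_mul_norm] at hxx
      have hxpos : 0 < ‖x‖ := norm_pos_iff.mpr h0
      have hfin : ‖x‖ * ‖x‖ ≤ (c * ‖y‖) * ‖x‖ := by
        calc ‖x‖ * ‖x‖ ≤ c * ‖y‖ * ‖x‖ := hxx
          _ = (c * ‖y‖) * ‖x‖ := by ring
      exact le_of_mul_le_mul_right hfin hxpos


end
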